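/- Every submodule I of R[x₁,…,x_n]^k over a Euclidean domain R has a finite reduced strong Gröbner basis with respect to any admissible order; moreover it can be obtained by choosing, for each minimal element ((α,i),d) of Deg_δ(I) under the order ⊑, the ≤_P-minimal element g of I with Deg_δ(g) = ((α,i),d). -/

import Mathlib

open MvPolynomial

/-- Polynomial vectors: `R[x₁,…,x_n]^k`. -/
abbrev PolyVec (R : Type*) [CommSemiring R] (n k : ℕ) := Fin k → MvPolynomial (Fin n) R

/-- Monomial vectors `x^α e_i`, encoded as pairs `(α, i)`. -/
abbrev MonV (n k : ℕ) := (Fin n →₀ ℕ) × Fin k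

/-- An admissible order on monomial vectors. -/
structure AdmissibleOrder (n k : ℕ) where
  le : MonV n k → MonV n k → Prop
  refl : ∀ a, le a a
  trans : ∀ a b c, le a b → le b c → le a c
  antisymm : ∀ a b, le a b → le b a → a = b
  total : ∀ a b, le a b ∨ le b a
  dvd_le : ∀ (α β : Fin n →₀ ℕ) (i : Fin k), (∀ m, α m ≤ β m) → le (α, i) (β, i)
  add_le : ∀ (α β γ : Fin n →₀ ℕ) (i j : Fin k),
    le (α, i) (β, j) → le (α + γ, i) (β + γ, j)

variable {R : Type*} [CommRing R] {n k : ℕ}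

/-- `m` is the leading monomial vector of `f` w.r.t. the admissible order `r`
(so in particular `f ≠ 0`). -/
def IsDeg (r : AdmissibleOrder n k) (f : PolyVec R n k) (m : MonV n k) : Prop :=
  (f m.2).coeff m.1 ≠ 0 ∧ ∀ m' : MonV n k, (f m'.2).coeff m'.1 ≠ 0 → r.le m' m

/-- The leading term vector of `g` divides the leading term vector of `f`:
same position, componentwise smaller exponent, and the leading coefficient of `g`
divides that of `f` in `R`. -/
def LtDvd (r : AdmissibleOrder n k) (g f : PolyVec R n k) : Prop :=
  ∃ mg mf : MonV n k, IsDeg r g mg ∧ IsDeg r f mf ∧ mg.2 = mf.2 ∧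
    (∀ m, mg.1 m ≤ mf.1 m) ∧ (g mg.2).coeff mg.1 ∣ (f mf.2).coeff mf.1

/-- `G` is a strong Gröbner basis of the submodule `I` w.r.t. `r`. -/
def IsSGB (r : AdmissibleOrder n k) (G : Set (PolyVec R n k))
    (I : Submodule (MvPolynomial (Fin n) R) (PolyVec R n k)) : Prop :=
  (∀ g ∈ G, g ∈ I ∧ g ≠ 0) ∧
  ∀ f ∈ I, f ≠ 0 → ∃ g ∈ G, LtDvd r g f

/-- Multiplication of a polynomial vector by the term `a·x^m`. -/
noncomputable def termSMul (m : Fin n →₀ ℕ) (a : R) (g : PolyVec R n k) : PolyVec R n k :=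
  fun j => MvPolynomial.monomial m a * g j

/-- `f` has a strong standard representation by `G`: `f = Σ aᵢ mᵢ gᵢ` with `gᵢ ∈ G`,
`Lm(m₁g₁) = Lm(f)` and `Lm(mᵢgᵢ) < Lm(f)` for `i ≥ 2`. -/
def IsSSR (r : AdmissibleOrder n k) (G : Set (PolyVec R n k)) (f : PolyVec R n k) : Prop :=
  ∃ (N : ℕ) (hN : 0 < N) (a : Fin N → R) (m : Fin N → (Fin n →₀ ℕ))
    (g : Fin N → PolyVec R n k),
    (∀ i, g i ∈ G) ∧
    f = ∑ i, termSMul (m i) (a i) (g i) ∧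
    ∃ mf m0 : MonV n k, IsDeg r f mf ∧ IsDeg r (g ⟨0, hN⟩) m0 ∧
      ((m ⟨0, hN⟩ + m0.1, m0.2) : MonV n k) = mf ∧
      ∀ i : Fin N, i ≠ ⟨0, hN⟩ → ∃ mi : MonV n k, IsDeg r (g i) mi ∧
        r.le (m i + mi.1, mi.2) mf ∧ ((m i + mi.1, mi.2) : MonV n k) ≠ mf

/-- `h` is an `S`-polynomial vector of the ordered pair `(f, g)` w.r.t. the
Euclidean grading `δ`. -/
def IsSPolyPair {W : Type*} [LinearOrder W] (δ : R → W) (r : AdmissibleOrder n k)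
    (f g h : PolyVec R n k) : Prop :=
  ∃ mf mg : MonV n k, IsDeg r f mf ∧ IsDeg r g mg ∧
    ((mf.2 ≠ mg.2 ∧ h = 0) ∨
     (mf.2 = mg.2 ∧ δ ((g mg.2).coeff mg.1) ≤ δ ((f mf.2).coeff mf.1) ∧
       ∃ q : R,
         δ ((f mf.2).coeff mf.1 - q * (g mg.2).coeff mg.1) < δ ((f mf.2).coeff mf.1) ∧
         h = termSMul ((mf.1 ⊔ mg.1) - mg.1) 1 f - termSMul ((mf.1 ⊔ mg.1) - mf.1) q g))

/-- `h` is an `S`-polynomial vector of the (unordered) set `{f, g}`. -/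
def IsSPolySet {W : Type*} [LinearOrder W] (δ : R → W) (r : AdmissibleOrder n k)
    (f g h : PolyVec R n k) : Prop :=
  IsSPolyPair δ r f g h ∨ IsSPolyPair δ r g f h

section Reduction

variable {R : Type*} [CommRing R] {n k : ℕ} {W' : Type*} [LinearOrder W']

/-- The term `b·x^α e_i` is reducible by `G`: some `g ∈ G` has `Lm(g) ∣ x^α e_i` and
`δ̂(b − q·Lc(g)) < δ̂(b)` for some `q ∈ R`. -/
def TermRed (dh : R → W') (r : AdmissibleOrder n k) (G : Set (PolyVec R n k))
    (b : R) (α : Fin n →₀ ℕ) (i : Fin k) : Prop :=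
  ∃ g ∈ G, ∃ mg : MonV n k, IsDeg r g mg ∧ mg.2 = i ∧ (∀ m, mg.1 m ≤ α m) ∧
    ∃ q : R, dh (b - q * (g mg.2).coeff mg.1) < dh b

/-- `f` is reducible by `G` if one of its terms is reducible by `G`. -/
def Red (dh : R → W') (r : AdmissibleOrder n k) (G : Set (PolyVec R n k))
    (f : PolyVec R n k) : Prop :=
  ∃ (α : Fin n →₀ ℕ) (i : Fin k), (f i).coeff α ≠ 0 ∧ TermRed dh r G ((f i).coeff α) α i

/-- `p` is normalized: `p ≠ 0` and `δ̂(Lc p) ≤ δ̂(u · Lc p)` for every unit `u`. -/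
def Normalized (dh : R → W') (r : AdmissibleOrder n k) (p : PolyVec R n k) : Prop :=
  p ≠ 0 ∧ ∃ mp : MonV n k, IsDeg r p mp ∧
    ∀ u : R, IsUnit u → dh ((p mp.2).coeff mp.1) ≤ dh (u * (p mp.2).coeff mp.1)

/-- `G` is a reduced strong Gröbner basis of `I`. -/
def IsRedSGB (dh : R → W') (r : AdmissibleOrder n k) (G : Set (PolyVec R n k))
    (I : Submodule (MvPolynomial (Fin n) R) (PolyVec R n k)) : Prop :=
  IsSGB r G I ∧ ∀ g ∈ G, Normalized dh r g ∧ ¬ Red dh r (G \ {g}) g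

end Reduction

section Eleven

variable {R : Type*} [CommRing R] {n k : ℕ}
  {W : Type*} [LinearOrder W] {W' : Type*} [LinearOrder W']

/-- `Deg_δ(f) = d`, i.e. `d = ((α,i), δ(Lc f))` where `x^α e_i = Lm f`. -/
def DegD (δ : R → W) (r : AdmissibleOrder n k) (f : PolyVec R n k)
    (d : MonV n k × W) : Prop :=
  IsDeg r f d.1 ∧ δ ((f d.1.2).coeff d.1.1) = d.2

/-- The order `⊑` on `(ℕ₀ⁿ × {1,…,k}) × W`. -/
def SqLe (d e : MonV n k × W) : Prop :=
  (∀ m, d.1.1 m ≤ e.1.1 m) ∧ d.1.2 = e.1.2 ∧ d.2 ≤ e.2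

/-- The total order `≤_P` on polynomial vectors determined by the admissible order
and the refinement `δ̂`. -/
def LeP (dh : R → W') (r : AdmissibleOrder n k) (p q : PolyVec R n k) : Prop :=
  p = q ∨ ∃ m : MonV n k, IsDeg r (p - q) m ∧
    dh ((p m.2).coeff m.1) < dh ((q m.2).coeff m.1)

end Eleven

/-!
For every `⊑`-minimal `d ∈ Deg_δ(I)` pick the `≤_P`-least element of `I` with `Deg_δ`-value `d`.
The order `≤_P` is well founded, being a lexicographic order on coefficient functions along the
admissible order, which is itself well founded by Dickson's lemma; and the `⊑`-minimal elements
form an antichain for the well-quasi-order `⊑`, so there are finitely many of them.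

Strong Gröbner basis: given `0 ≠ f ∈ I`, let `v` be the least `δ`-value of a leading coefficient
of an element of `I` with leading monomial `Lm f`. Some chosen `g` has `Deg_δ(g) ⊑ (Lm f, v)`, and
`Lc g ∣ Lc f`: otherwise subtracting `q x^γ g` from `f`, with `q` the quotient of `Lc f` by
`Lc g`, leaves an element of `I` with leading monomial `Lm f` and leading coefficient of
`δ`-value below `v`.

Reducedness: if `g` were not normalized, or if a term of `g` were reducible by another basis
element, then the corresponding unit multiple, resp. one-step reduction, of `g` would be an
element of `I` with the same `Deg_δ`-value as `g` but `≤_P`-smaller.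
-/

namespace AdmissibleOrder

variable (r : AdmissibleOrder n k)

def lt (a b : MonV n k) : Prop := r.le a b ∧ ¬ r.le b a

instance : IsPreorder (MonV n k) r.le where
  refl := r.refl
  trans := r.trans

instance : IsStrictOrder (MonV n k) r.lt where
  irrefl _ h := h.2 h.1
  trans _ _ _ h₁ h₂ := ⟨r.trans _ _ _ h₁.1 h₂.1, fun h => h₁.2 (r.trans _ _ _ h₂.1 h)⟩

instance : Std.Trichotomous r.lt where
  trichotomous a b h₁ h₂ := by
    rcases r.total a b with h | h
    · exact r.antisymm a b h (by_contra fun h' => h₁ ⟨h, h'⟩)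
    · exact r.antisymm a b (by_contra fun h' => h₂ ⟨h, h'⟩) h

variable {r}

theorem not_le {a b : MonV n k} : ¬ r.le a b ↔ r.lt b a :=
  ⟨fun h => ⟨(r.total a b).resolve_left h, h⟩, fun h => h.2⟩

theorem le_of_fst_le {a b : MonV n k} (h₁ : a.1 ≤ b.1) (h₂ : a.2 = b.2) : r.le a b := by
  obtain ⟨α, i⟩ := a
  obtain ⟨β, j⟩ := b
  obtain rfl : i = j := h₂
  exact r.dvd_le α β i (Finsupp.le_def.1 h₁)

variable (r)

theorem wellQuasiOrdered_le : WellQuasiOrdered r.le := by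
  intro f
  obtain ⟨a, b, hab, h₁, h₂⟩ :=
    (_root_.wellQuasiOrdered_le.prod (Finite.wellQuasiOrdered (α := Fin k) Eq)) f
  exact ⟨a, b, hab, le_of_fst_le h₁ h₂⟩

theorem wellFounded_lt : WellFounded r.lt :=
  r.wellQuasiOrdered_le.wellFounded

end AdmissibleOrder

section LeadingMonomial

variable {r : AdmissibleOrder n k} {f g p q : PolyVec R n k} {m mf mg : MonV n k}
  {α : Fin n →₀ ℕ}

@[simp]
theorem coeff_sub_apply (p q : PolyVec R n k) (i : Fin k) (α : Fin n →₀ ℕ) :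
    ((p - q) i).coeff α = (p i).coeff α - (q i).coeff α :=
  coeff_sub ..

@[simp]
theorem coeff_C_smul_apply (c : R) (p : PolyVec R n k) (i : Fin k) (α : Fin n →₀ ℕ) :
    (((C c : MvPolynomial (Fin n) R) • p) i).coeff α = c * (p i).coeff α :=
  coeff_C_mul ..

theorem finite_setOf_coeff_ne_zero (f : PolyVec R n k) :
    {m : MonV n k | (f m.2).coeff m.1 ≠ 0}.Finite := by
  refine (Set.finite_iUnion fun i : Fin k => (f i).support.finite_toSet.image (·, i)).subset ?_
  rintro ⟨α, i⟩ h
  exact Set.mem_iUnion.2 ⟨i, α, mem_support_iff.2 h, rfl⟩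

theorem exists_isDeg (r : AdmissibleOrder n k) (hf : f ≠ 0) : ∃ m, IsDeg r f m := by
  obtain ⟨i, hi⟩ := Function.ne_iff.1 hf
  obtain ⟨α, hα⟩ := ne_zero_iff.1 hi
  obtain ⟨⟨m, hm⟩, -, hmax⟩ :=
    ((finite_setOf_coeff_ne_zero f).wellFoundedOn (r := Function.swap r.lt)).has_min
      Set.univ ⟨⟨(α, i), hα⟩, trivial⟩
  exact ⟨m, hm, fun m' hm' => by_contra fun h => hmax ⟨m', hm'⟩ trivial (r.not_le.1 h)⟩

theorem IsDeg.unique {m' : MonV n k} (h : IsDeg r f m) (h' : IsDeg r f m') : m = m' :=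
  r.antisymm m m' (h'.2 m h.1) (h.2 m' h'.1)

theorem IsDeg.ne_zero (h : IsDeg r f m) : f ≠ 0 := by
  rintro rfl
  exact h.1 (coeff_zero _)

theorem isDeg_neg : IsDeg r (-f) m ↔ IsDeg r f m := by
  simp [IsDeg]

theorem isDeg_sub_comm : IsDeg r (p - q) m ↔ IsDeg r (q - p) m := by
  rw [← neg_sub, isDeg_neg]

theorem IsDeg.C_smul (h : IsDeg r f m) {c : R} (hc : c * (f m.2).coeff m.1 ≠ 0) :
    IsDeg r ((C c : MvPolynomial (Fin n) R) • f) m :=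
  ⟨by simpa using hc, fun m' hm' => h.2 m' (right_ne_zero_of_mul (by simpa using hm'))⟩

theorem IsDeg.sub_of_le (hf : IsDeg r f m) (hg : ∀ m', (g m'.2).coeff m'.1 ≠ 0 → r.le m' m)
    (h : ((f - g) m.2).coeff m.1 ≠ 0) : IsDeg r (f - g) m := by
  refine ⟨h, fun m' hm' => ?_⟩
  by_cases hf' : (f m'.2).coeff m'.1 = 0
  · exact hg m' (by simpa [hf'] using hm')
  · exact hf.2 m' hf'

theorem coeff_termSMul_tsub {β : Fin n →₀ ℕ} (h : β ≤ α) (a : R) (g : PolyVec R n k)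
    (i : Fin k) : ((termSMul (α - β) a g) i).coeff α = a * (g i).coeff β := by
  show coeff α (monomial (α - β) a * g i) = _
  simpa only [tsub_add_cancel_of_le h] using coeff_monomial_mul β (α - β) a (g i)

theorem termSMul_tsub_le (hg : IsDeg r g mg) (hα : mg.1 ≤ α) (a : R)
    (hm : ((termSMul (α - mg.1) a g) m.2).coeff m.1 ≠ 0) : r.le m (α, mg.2) := by
  rw [termSMul, coeff_monomial_mul'] at hm
  split_ifs at hm with hle
  · have h := r.add_le _ _ (α - mg.1) _ _ (hg.2 (m.1 - (α - mg.1), m.2) (right_ne_zero_of_mul hm))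
    rwa [tsub_add_cancel_of_le hle, add_tsub_cancel_of_le hα] at h
  · exact absurd rfl hm

theorem IsDeg.termSMul_tsub (hg : IsDeg r g mg) (hα : mg.1 ≤ α) {a : R}
    (ha : a * (g mg.2).coeff mg.1 ≠ 0) : IsDeg r (termSMul (α - mg.1) a g) (α, mg.2) :=
  ⟨by rwa [coeff_termSMul_tsub hα], fun _ hm => termSMul_tsub_le hg hα a hm⟩

theorem IsDeg.sub_termSMul_tsub (hf : IsDeg r f mf) (hg : IsDeg r g mg) (hα : mg.1 ≤ α)
    (hle : r.le (α, mg.2) mf) {a : R}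
    (h : ((f - termSMul (α - mg.1) a g) mf.2).coeff mf.1 ≠ 0) :
    IsDeg r (f - termSMul (α - mg.1) a g) mf :=
  hf.sub_of_le (fun _ hm => r.trans _ _ _ (termSMul_tsub_le hg hα a hm) hle) h

theorem termSMul_mem {I : Submodule (MvPolynomial (Fin n) R) (PolyVec R n k)} (hg : g ∈ I)
    (τ : Fin n →₀ ℕ) (a : R) : termSMul τ a g ∈ I :=
  I.smul_mem (monomial τ a) hg

end LeadingMonomial

section OrderP

variable {W' : Type*} [LinearOrder W'] {dh : R → W'} {r : AdmissibleOrder n k}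
  {p q : PolyVec R n k}

-- `LeP dh r p q` unfolds to `p = q ∨ LtP dh r p q`.
def LtP (dh : R → W') (r : AdmissibleOrder n k) (p q : PolyVec R n k) : Prop :=
  ∃ m : MonV n k, IsDeg r (p - q) m ∧ dh ((p m.2).coeff m.1) < dh ((q m.2).coeff m.1)

theorem LtP.not_ltP (h : LtP dh r p q) : ¬ LtP dh r q p := by
  rintro ⟨m', hm', hlt'⟩
  obtain ⟨m, hm, hlt⟩ := h
  obtain rfl := hm.unique (isDeg_sub_comm.1 hm')
  exact hlt.asymm hlt'

theorem LtP.not_leP (h : LtP dh r p q) : ¬ LeP dh r q p := by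
  rintro (rfl | h')
  · obtain ⟨m, hm, -⟩ := h
    exact hm.ne_zero (sub_self q)
  · exact h.not_ltP h'

theorem ltP_or_ltP_of_ne (hinj : Function.Injective dh) (hne : p ≠ q) :
    LtP dh r p q ∨ LtP dh r q p := by
  obtain ⟨m, hm⟩ := exists_isDeg r (sub_ne_zero.2 hne)
  have hcoeff : dh ((p m.2).coeff m.1) ≠ dh ((q m.2).coeff m.1) :=
    hinj.ne (sub_ne_zero.1 (by simpa using hm.1))
  rcases hcoeff.lt_or_gt with h | h
  · exact Or.inl ⟨m, hm, h⟩
  · exact Or.inr ⟨m, isDeg_sub_comm.1 hm, h⟩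

variable [WellFoundedLT W']

theorem wellFounded_ltP (dh0 : ∀ a : R, dh 0 ≤ dh a) (r : AdmissibleOrder n k) :
    WellFounded (LtP dh r) := by
  -- `LtP` compares coefficient functions lexicographically, from the `r`-largest monomial down.
  have hlex : WellFounded (Finsupp.Lex (Function.swap r.lt) fun a b : R => dh a < dh b) :=
    Finsupp.Lex.wellFounded' (fun a h => (dh0 a).not_gt h) (InvImage.wf dh wellFounded_lt)
      r.wellFounded_lt
  refine Subrelation.wf ?_
    (InvImage.wf (fun p => Finsupp.ofSupportFinite _ (finite_setOf_coeff_ne_zero p)) hlex)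
  rintro p q ⟨m, hm, hlt⟩
  refine ⟨m, fun m' hm' => ?_, hlt⟩
  by_contra hne
  change (p m'.2).coeff m'.1 ≠ (q m'.2).coeff m'.1 at hne
  exact hm'.2 (hm.2 m' (by simpa [sub_eq_zero] using hne))

theorem exists_leP_minimal (hinj : Function.Injective dh) (dh0 : ∀ a : R, dh 0 ≤ dh a)
    (r : AdmissibleOrder n k) {S : Set (PolyVec R n k)} (hS : S.Nonempty) :
    ∃ g ∈ S, ∀ g' ∈ S, LeP dh r g g' := by
  obtain ⟨g, hg, hmin⟩ := (wellFounded_ltP dh0 r).has_min S hS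
  exact ⟨g, hg, fun g' hg' => or_iff_not_imp_left.2 fun hne =>
    (ltP_or_ltP_of_ne hinj hne).resolve_right (hmin g' hg')⟩

end OrderP

section SqLe

variable {W : Type*} [LinearOrder W]

instance : IsPreorder (MonV n k × W) SqLe where
  refl _ := ⟨fun _ => le_rfl, rfl, le_rfl⟩
  trans _ _ _ h₁ h₂ :=
    ⟨fun m => (h₁.1 m).trans (h₂.1 m), h₁.2.1.trans h₂.2.1, h₁.2.2.trans h₂.2.2⟩

theorem sqLe_antisymm {d e : MonV n k × W} (h₁ : SqLe d e) (h₂ : SqLe e d) : d = e :=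
  Prod.ext (Prod.ext (Finsupp.ext fun m => (h₁.1 m).antisymm (h₂.1 m)) h₁.2.1)
    (h₁.2.2.antisymm h₂.2.2)

variable [WellFoundedLT W]

theorem wellQuasiOrdered_sqLe : WellQuasiOrdered (SqLe : MonV n k × W → MonV n k × W → Prop) := by
  intro f
  obtain ⟨a, b, hab, hle, hpos⟩ :=
    (wellQuasiOrdered_le.prod (Finite.wellQuasiOrdered (α := Fin k) Eq))
      fun t => (((f t).1.1, (f t).2), (f t).1.2)
  exact ⟨a, b, hab, Finsupp.le_def.1 hle.1, hpos, hle.2⟩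

theorem exists_minimal_sqLe {S : Set (MonV n k × W)} {e : MonV n k × W} (he : e ∈ S) :
    ∃ d ∈ S, SqLe d e ∧ ∀ e' ∈ S, SqLe e' d → e' = d := by
  obtain ⟨d, ⟨hdS, hde⟩, hmin⟩ :=
    wellQuasiOrdered_sqLe.wellFounded.has_min {d | d ∈ S ∧ SqLe d e} ⟨e, he, refl e⟩
  refine ⟨d, hdS, hde, fun e' he' hle => by_contra fun hne => ?_⟩
  exact hmin e' ⟨he', _root_.trans hle hde⟩ ⟨hle, fun h => hne (sqLe_antisymm hle h)⟩

theorem finite_setOf_minimal_sqLe (S : Set (MonV n k × W)) :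
    {d | d ∈ S ∧ ∀ e ∈ S, SqLe e d → e = d}.Finite :=
  IsAntichain.finite_of_wellQuasiOrdered (fun d hd _ he hne hle => hne (he.2 d hd.1 hle))
    wellQuasiOrdered_sqLe

end SqLe

section Construction

variable {W : Type*} {W' : Type*} [LinearOrder W'] {δ : R → W} {dh : R → W'}
  {r : AdmissibleOrder n k} {I : Submodule (MvPolynomial (Fin n) R) (PolyVec R n k)}
  {f g T : PolyVec R n k} {m mf mg : MonV n k} {d e : MonV n k × W}

variable (δ r I) in
/-- `Deg_δ(I)`. -/
def degSet : Set (MonV n k × W) := {e | ∃ f ∈ I, DegD δ r f e}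

variable (δ dh r I) in
def IsMinRep (d : MonV n k × W) (g : PolyVec R n k) : Prop :=
  g ∈ I ∧ DegD δ r g d ∧ ∀ g' ∈ I, DegD δ r g' d → LeP dh r g g'

theorem DegD.unique (h : DegD δ r f d) (h' : DegD δ r f e) : d = e :=
  Prod.ext (h.1.unique h'.1) (by rw [← h.2, ← h'.2, h.1.unique h'.1])

theorem exists_isMinRep [WellFoundedLT W'] (hinj : Function.Injective dh)
    (dh0 : ∀ a : R, dh 0 ≤ dh a) (hd : d ∈ degSet δ r I) : ∃ g, IsMinRep δ dh r I d g := by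
  obtain ⟨g, ⟨hgI, hgd⟩, hmin⟩ :=
    exists_leP_minimal hinj dh0 r (S := {g | g ∈ I ∧ DegD δ r g d}) hd
  exact ⟨g, hgI, hgd, fun g' hg' hd' => hmin g' ⟨hg', hd'⟩⟩

variable [LinearOrder W]

variable (δ r I) in
def IsMinDeg (d : MonV n k × W) : Prop :=
  d ∈ degSet δ r I ∧ ∀ e ∈ degSet δ r I, SqLe e d → e = d

theorem apply_unit_mul_eq (hmul : ∀ a b : R, a ≠ 0 → δ b ≤ δ (a * b)) {u : R} (hu : IsUnit u)
    (a : R) : δ (u * a) = δ a := by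
  rcases subsingleton_or_nontrivial R with _ | _
  · rw [Subsingleton.elim (u * a) a]
  obtain ⟨u, rfl⟩ := hu
  refine le_antisymm ?_ (hmul _ _ u.ne_zero)
  simpa using hmul (↑u⁻¹ : R) (↑u * a) (Units.ne_zero _)

theorem exists_lc_lt_of_not_dvd (hdiv : ∀ a b : R, a ≠ 0 → ∃ q s : R, b = q * a + s ∧ δ s < δ a)
    (hf : f ∈ I) (hmf : IsDeg r f mf) (hg : g ∈ I) (hmg : IsDeg r g mg) (hpos : mg.2 = mf.2)
    (hexp : mg.1 ≤ mf.1) (hndvd : ¬ (g mg.2).coeff mg.1 ∣ (f mf.2).coeff mf.1) :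
    ∃ f' ∈ I, IsDeg r f' mf ∧ δ ((f' mf.2).coeff mf.1) < δ ((g mg.2).coeff mg.1) := by
  obtain ⟨β, j⟩ := mg
  obtain ⟨α, i⟩ := mf
  obtain rfl : i = j := hpos.symm
  obtain ⟨q, s, hqs, hs⟩ := hdiv _ ((f i).coeff α) hmg.1
  have hcoeff : ((f - termSMul (α - β) q g) i).coeff α = s := by
    rw [coeff_sub_apply, coeff_termSMul_tsub hexp, hqs, add_sub_cancel_left]
  have hs0 : s ≠ 0 := by
    rintro rfl
    exact hndvd (Dvd.intro_left q (by rw [hqs, add_zero]))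
  refine ⟨_, I.sub_mem hf (termSMul_mem hg _ q), ?_, by rwa [hcoeff]⟩
  exact hmf.sub_termSMul_tsub hmg hexp (r.refl _) (by rwa [hcoeff])

theorem exists_ltDvd_of_forall_isMinDeg [WellFoundedLT W]
    (hdiv : ∀ a b : R, a ≠ 0 → ∃ q s : R, b = q * a + s ∧ δ s < δ a)
    {G : Set (PolyVec R n k)} (hG : ∀ d, IsMinDeg δ r I d → ∃ g ∈ G, g ∈ I ∧ DegD δ r g d)
    (hf : f ∈ I) (hf0 : f ≠ 0) : ∃ g ∈ G, LtDvd r g f := by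
  obtain ⟨mf, hmf⟩ := exists_isDeg r hf0
  obtain ⟨f₀, ⟨hf₀, hmf₀⟩, hmin⟩ :=
    (InvImage.wf (fun h : PolyVec R n k => δ ((h mf.2).coeff mf.1)) wellFounded_lt).has_min
      {h | h ∈ I ∧ IsDeg r h mf} ⟨f, hf, hmf⟩
  obtain ⟨d, hdS, hd, hdmin⟩ := exists_minimal_sqLe (S := degSet δ r I)
    (e := (mf, δ ((f₀ mf.2).coeff mf.1))) ⟨f₀, hf₀, hmf₀, rfl⟩
  obtain ⟨g, hgG, hg, hgd⟩ := hG d ⟨hdS, hdmin⟩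
  refine ⟨g, hgG, d.1, mf, hgd.1, hmf, hd.2.1, hd.1, by_contra fun hndvd => ?_⟩
  obtain ⟨f', hf', hmf', hlt⟩ :=
    exists_lc_lt_of_not_dvd hdiv hf hmf hg hgd.1 hd.2.1 (Finsupp.le_def.2 hd.1) hndvd
  exact hmin f' ⟨hf', hmf'⟩ (hlt.trans_le (hgd.2 ▸ hd.2.2))

theorem IsMinRep.normalized (hmul : ∀ a b : R, a ≠ 0 → δ b ≤ δ (a * b))
    (hg : IsMinRep δ dh r I d g) : Normalized dh r g := by
  obtain ⟨hgI, ⟨hdeg, hδ⟩, hmin⟩ := hg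
  refine ⟨hdeg.ne_zero, d.1, hdeg, fun u hu => not_lt.1 fun hlt => ?_⟩
  have hub : u * (g d.1.2).coeff d.1.1 ≠ 0 := hu.mul_right_eq_zero.not.2 hdeg.1
  have hu1 : (u - 1) * (g d.1.2).coeff d.1.1 ≠ 0 := by
    rw [sub_mul, one_mul, sub_ne_zero]
    exact fun h => hlt.ne (by rw [h])
  have hsub : (C u : MvPolynomial (Fin n) R) • g - g =
      (C (u - 1) : MvPolynomial (Fin n) R) • g := by
    rw [map_sub, map_one, sub_smul, one_smul]
  have hlt' : LtP dh r ((C u : MvPolynomial (Fin n) R) • g) g :=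
    ⟨d.1, hsub ▸ hdeg.C_smul hu1, by simpa using hlt⟩
  exact hlt'.not_leP (hmin _ (I.smul_mem _ hgI)
    ⟨hdeg.C_smul hub, by rw [coeff_C_smul_apply, apply_unit_mul_eq hmul hu, hδ]⟩)

theorem IsMinDeg.degD_sub (hd : IsMinDeg δ r I d) (hg : g ∈ I) (hgd : DegD δ r g d) (hT : T ∈ I)
    (hmT : IsDeg r T m) (hm : r.le m d.1)
    (hδ : δ (((g - T) m.2).coeff m.1) ≤ δ ((g m.2).coeff m.1))
    (hc : m = d.1 → ((g - T) m.2).coeff m.1 ≠ 0) : DegD δ r (g - T) d := by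
  have hbound : ∀ m', (T m'.2).coeff m'.1 ≠ 0 → r.le m' d.1 :=
    fun m' h => r.trans _ _ _ (hmT.2 m' h) hm
  by_cases hmd : m = d.1
  · subst hmd
    have hdeg := hgd.1.sub_of_le hbound (hc rfl)
    have heq := hd.2 (d.1, δ (((g - T) d.1.2).coeff d.1.1)) ⟨g - T, I.sub_mem hg hT, hdeg, rfl⟩
      ⟨fun _ => le_rfl, rfl, hδ.trans_eq hgd.2⟩
    exact ⟨hdeg, congrArg Prod.snd heq⟩
  · have hT0 : (T d.1.2).coeff d.1.1 = 0 :=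
      by_contra fun h => hmd (r.antisymm _ _ hm (hmT.2 _ h))
    have hcoeff : ((g - T) d.1.2).coeff d.1.1 = (g d.1.2).coeff d.1.1 := by simp [hT0]
    exact ⟨hgd.1.sub_of_le hbound (hcoeff ▸ hgd.1.1), hcoeff ▸ hgd.2⟩

theorem IsMinRep.term_not_reducible (hmul : ∀ a b : R, a ≠ 0 → δ b ≤ δ (a * b))
    (hmono : ∀ a b : R, δ a < δ b → dh a < dh b) (hg : IsMinRep δ dh r I d g)
    (hd : IsMinDeg δ r I d) {g₁ : PolyVec R n k} (hg₁ : g₁ ∈ I) (hmg : IsDeg r g₁ mg)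
    (hne : ¬ DegD δ r g₁ d) {α : Fin n →₀ ℕ} (hb : (g mg.2).coeff α ≠ 0) (hα : mg.1 ≤ α)
    (q : R) : ¬ dh ((g mg.2).coeff α - q * (g₁ mg.2).coeff mg.1) < dh ((g mg.2).coeff α) := by
  intro hq
  obtain ⟨hgI, hgd, hmin⟩ := hg
  set T := termSMul (α - mg.1) q g₁
  have hqc : q * (g₁ mg.2).coeff mg.1 ≠ 0 := fun h => hq.ne (by rw [h, sub_zero])
  have hcoeff : ((g - T) mg.2).coeff α = (g mg.2).coeff α - q * (g₁ mg.2).coeff mg.1 := by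
    rw [coeff_sub_apply, coeff_termSMul_tsub hα]
  have hm : r.le (α, mg.2) d.1 := hgd.1.2 _ hb
  by_cases hlead : (α, mg.2) = d.1 ∧ ((g - T) mg.2).coeff α = 0
  · -- the leading term of `g` is cancelled exactly, so `Deg_δ(g₁) ⊑ d`
    obtain ⟨hmd, hc0⟩ := hlead
    have hδ : δ ((g₁ mg.2).coeff mg.1) ≤ d.2 :=
      calc δ ((g₁ mg.2).coeff mg.1) ≤ δ (q * (g₁ mg.2).coeff mg.1) :=
            hmul q _ (left_ne_zero_of_mul hqc)
        _ = δ ((g mg.2).coeff α) := by rw [sub_eq_zero.1 (hcoeff.symm.trans hc0)]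
        _ = d.2 := by rw [← hgd.2, ← hmd]
    have hSq : SqLe (mg, δ ((g₁ mg.2).coeff mg.1)) d := by
      refine ⟨fun i => ?_, by rw [← hmd], hδ⟩
      rw [← hmd]
      exact Finsupp.le_def.1 hα i
    exact hne (hd.2 _ ⟨g₁, hg₁, hmg, rfl⟩ hSq ▸ ⟨hmg, rfl⟩)
  · -- otherwise `g - T` has the same `Deg_δ`-value as `g` and is `<_P g`
    have hδ : δ (((g - T) mg.2).coeff α) ≤ δ ((g mg.2).coeff α) :=
      le_of_not_gt fun h => (hmono _ _ h).asymm (by rwa [hcoeff])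
    have hTI : T ∈ I := termSMul_mem hg₁ _ q
    have hdeg := hd.degD_sub hgI hgd hTI (hmg.termSMul_tsub hα hqc) hm hδ
      fun hmd h => hlead ⟨hmd, h⟩
    have hlt : LtP dh r (g - T) g :=
      ⟨(α, mg.2), by rw [isDeg_sub_comm, sub_sub_cancel]; exact hmg.termSMul_tsub hα hqc,
        by rwa [hcoeff]⟩
    exact hlt.not_leP (hmin _ (I.sub_mem hgI hTI) hdeg)

theorem not_red_of_isMinRep (hmul : ∀ a b : R, a ≠ 0 → δ b ≤ δ (a * b))
    (hmono : ∀ a b : R, δ a < δ b → dh a < dh b) {G : Set (PolyVec R n k)} (hGI : G ⊆ I)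
    (hg : IsMinRep δ dh r I d g) (hd : IsMinDeg δ r I d)
    (hGd : ∀ g₁ ∈ G, DegD δ r g₁ d → g₁ = g) : ¬ Red dh r (G \ {g}) g := by
  rintro ⟨α, _, hb, g₁, ⟨hg₁G, hg₁g⟩, mg, hmg, rfl, hα, q, hq⟩
  exact hg.term_not_reducible hmul hmono hd (hGI hg₁G) hmg (fun h => hg₁g (hGd g₁ hg₁G h)) hb
    (Finsupp.le_def.2 hα) q hq

theorem isRedSGB_image [WellFoundedLT W] (hmul : ∀ a b : R, a ≠ 0 → δ b ≤ δ (a * b))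
    (hdiv : ∀ a b : R, a ≠ 0 → ∃ q s : R, b = q * a + s ∧ δ s < δ a)
    (hmono : ∀ a b : R, δ a < δ b → dh a < dh b) {F : MonV n k × W → PolyVec R n k}
    (hF : ∀ d, IsMinDeg δ r I d → IsMinRep δ dh r I d (F d)) :
    IsRedSGB dh r (F '' {d | IsMinDeg δ r I d}) I := by
  have hGI : F '' {d | IsMinDeg δ r I d} ⊆ I := by
    rintro _ ⟨d, hd, rfl⟩
    exact (hF d hd).1
  refine ⟨⟨?_, fun f hf hf0 => exists_ltDvd_of_forall_isMinDeg hdiv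
    (fun d hd => ⟨F d, ⟨d, hd, rfl⟩, (hF d hd).1, (hF d hd).2.1⟩) hf hf0⟩, ?_⟩
  · rintro _ ⟨d, hd, rfl⟩
    exact ⟨(hF d hd).1, (hF d hd).2.1.1.ne_zero⟩
  · rintro _ ⟨d, hd, rfl⟩
    refine ⟨(hF d hd).normalized hmul, not_red_of_isMinRep hmul hmono hGI (hF d hd) hd ?_⟩
    rintro _ ⟨d', hd', rfl⟩ h
    rw [(hF d' hd').2.1.unique h]

end Construction

theorem exists_finite_reduced_sgb_general
    {R : Type*} [CommRing R] {n k : ℕ}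
    {W : Type*} [LinearOrder W] [WellFoundedLT W]
    {W' : Type*} [LinearOrder W'] [WellFoundedLT W']
    (δ : R → W)
    (hmul : ∀ a b : R, a ≠ 0 → δ b ≤ δ (a * b))
    (hdiv : ∀ a b : R, a ≠ 0 → ∃ q s : R, b = q * a + s ∧ δ s < δ a)
    (dh : R → W') (hinj : Function.Injective dh)
    (dh0 : ∀ a : R, dh 0 ≤ dh a)
    (hmono : ∀ a b : R, δ a < δ b → dh a < dh b)
    (r : AdmissibleOrder n k)
    (I : Submodule (MvPolynomial (Fin n) R) (PolyVec R n k)) :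
    ∃ G : Finset (PolyVec R n k),
      IsRedSGB dh r (↑G) I ∧
      -- every element of `G` realizes a `⊑`-minimal element of `Deg_δ(I)` and is
      -- `≤_P`-minimal among elements of `I` with that `Deg_δ`-value
      (∀ g ∈ G, ∃ d : MonV n k × W, DegD δ r g d ∧
        (∀ e : MonV n k × W, (∃ f ∈ I, DegD δ r f e) → SqLe e d → e = d) ∧
        (∀ g' ∈ I, DegD δ r g' d → LeP dh r g g')) ∧
      -- every `⊑`-minimal element of `Deg_δ(I)` is realized by some element of `G`
      (∀ d : MonV n k × W, (∃ f ∈ I, DegD δ r f d) →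
        (∀ e : MonV n k × W, (∃ f ∈ I, DegD δ r f e) → SqLe e d → e = d) →
        ∃ g ∈ G, DegD δ r g d) := by
  classical
  choose! F hF using fun d (hd : d ∈ degSet δ r I) => exists_isMinRep hinj dh0 hd
  have hF' : ∀ d, IsMinDeg δ r I d → IsMinRep δ dh r I d (F d) := fun d hd => hF d hd.1
  have hfin : {d | IsMinDeg δ r I d}.Finite := finite_setOf_minimal_sqLe _
  refine ⟨hfin.toFinset.image F, ?_, ?_, fun d hdS hdmin => ?_⟩
  · rw [Finset.coe_image, hfin.coe_toFinset]
    exact isRedSGB_image hmul hdiv hmono hF'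
  · simp only [Finset.mem_image, hfin.mem_toFinset]
    rintro _ ⟨d, hd, rfl⟩
    exact ⟨d, (hF' d hd).2.1, hd.2, (hF' d hd).2.2⟩
  · exact ⟨F d, Finset.mem_image_of_mem F (hfin.mem_toFinset.2 ⟨hdS, hdmin⟩), (hF d hdS).2.1⟩

/-- **existence of the reduced strong Gröbner basis.** Every submodule
`I` of `R[x₁,…,x_n]^k` over a Euclidean domain has a finite reduced strong Gröbner
basis; it is obtained by choosing, for each `⊑`-minimal element `d` of `Deg_δ(I)`,
the `≤_P`-minimal element of `I` with `Deg_δ`-value `d`. -/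
theorem exists_finite_reduced_sgb
    {R : Type*} [CommRing R] [IsDomain R] {n k : ℕ}
    {W : Type*} [LinearOrder W] [WellFoundedLT W]
    {W' : Type*} [LinearOrder W'] [WellFoundedLT W']
    (δ : R → W)
    (hzero : ∀ a : R, δ 0 ≤ δ a)
    (hmul : ∀ a b : R, a ≠ 0 → δ b ≤ δ (a * b))
    (hdiv : ∀ a b : R, a ≠ 0 → ∃ q s : R, b = q * a + s ∧ δ s < δ a)
    (dh : R → W') (hinj : Function.Injective dh)
    (dh0 : ∀ a : R, dh 0 ≤ dh a)
    (hmono : ∀ a b : R, δ a < δ b → dh a < dh b)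
    (r : AdmissibleOrder n k)
    (I : Submodule (MvPolynomial (Fin n) R) (PolyVec R n k)) :
    ∃ G : Finset (PolyVec R n k),
      IsRedSGB dh r (↑G) I ∧
      -- every element of `G` realizes a `⊑`-minimal element of `Deg_δ(I)` and is
      -- `≤_P`-minimal among elements of `I` with that `Deg_δ`-value
      (∀ g ∈ G, ∃ d : MonV n k × W, DegD δ r g d ∧
        (∀ e : MonV n k × W, (∃ f ∈ I, DegD δ r f e) → SqLe e d → e = d) ∧
        (∀ g' ∈ I, DegD δ r g' d → LeP dh r g g')) ∧
      -- every `⊑`-minimal element of `Deg_δ(I)` is realized by some element of `G`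
      (∀ d : MonV n k × W, (∃ f ∈ I, DegD δ r f d) →
        (∀ e : MonV n k × W, (∃ f ∈ I, DegD δ r f e) → SqLe e d → e = d) →
        ∃ g ∈ G, DegD δ r g d) :=
  exists_finite_reduced_sgb_general δ hmul hdiv dh hinj dh0 hmono r I
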